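/- arXiv:1902.01088 — 2 statements merged into one kernel-verified Lean document; each statement's English description precedes it below -/
import Mathlib

section
/- Let L ⊆ Σ* be a language recognized by a Wheeler NFA. Then the relation ≡ᶜ_L on Pref(L), defined as the input-consistent convex refinement of the Myhill-Nerode relation, has finite index. -/
variable {V : Type*} {A : Type*}

/-- `Reaches E s α v`: the string `α` labels a path in the labeled graph `E`
from the state `s` to the state `v`. -/
inductive Reaches (E : V → A → V → Prop) (s : V) : List A → V → Prop
  | nil : Reaches E s [] s
  | snoc {α : List A} {u w : V} {a : A} :
      Reaches E s α u → E u a w → Reaches E s (α ++ [a]) w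

/-- Co-lexicographic (strict) order on strings: lexicographic order of reverses. -/
def ColexLt [LinearOrder A] (α β : List A) : Prop :=
  List.Lex (· < ·) α.reverse β.reverse

/-- `r` is a strict total order. -/
def StrictTotal (r : V → V → Prop) : Prop :=
  (∀ x, ¬ r x x) ∧ (∀ x y z, r x y → r y z → r x z) ∧
  (∀ x y : V, x ≠ y → r x y ∨ r y x)

/-- `r` is a Wheeler order for the labeled graph `E`: a strict total order on states
such that in-degree-0 states precede all states with positive in-degree, edges with
strictly smaller labels point to strictly smaller states, and equally-labeled edges
from ordered sources point to weakly ordered targets. -/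
def WheelerRel [LinearOrder A] (E : V → A → V → Prop) (r : V → V → Prop) : Prop :=
  StrictTotal r ∧
  (∀ x w : V, (∀ u a, ¬ E u a x) → (∃ u a, E u a w) → r x w) ∧
  (∀ u₁ a₁ v₁ u₂ a₂ v₂, E u₁ a₁ v₁ → E u₂ a₂ v₂ → a₁ < a₂ → r v₁ v₂) ∧
  (∀ u₁ v₁ u₂ v₂ a, E u₁ a v₁ → E u₂ a v₂ → r u₁ u₂ → r v₁ v₂ ∨ v₁ = v₂)

/-- The language accepted by the automaton `(V, E, F, s)`. -/
def Lang (E : V → A → V → Prop) (F : Set V) (s : V) : Set (List A) :=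
  {α | ∃ w ∈ F, Reaches E s α w}

/-- `Pref(L(A))`: the set of prefixes of accepted strings. -/
def PrefL (E : V → A → V → Prop) (F : Set V) (s : V) : Set (List A) :=
  {α | ∃ β, α ++ β ∈ Lang E F s}

/-- `I_u`: the strings in `Pref(L(A))` labeling a path from `s` to `u`. -/
def Iset (E : V → A → V → Prop) (F : Set V) (s u : V) : Set (List A) :=
  {α | α ∈ PrefL E F s ∧ Reaches E s α u}

/-- `I_α`: the set of states reached from `s` by a path labeled `α`. -/
def Istr (E : V → A → V → Prop) (s : V) (α : List A) : Set V :=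
  {w | Reaches E s α w}

/-- The set of prefixes of words of a language. -/
def PrefSet (L : Set (List A)) : Set (List A) := {α | ∃ β, α ++ β ∈ L}

/-- The Myhill-Nerode relation: `α ≡_L β` iff `αγ ∈ L ⟺ βγ ∈ L` for all `γ`. -/
def MNrel (L : Set (List A)) (α β : List A) : Prop :=
  ∀ γ, (α ++ γ ∈ L ↔ β ++ γ ∈ L)

/-- `≡ᶜ_L`: the input-consistent, convex refinement of Myhill-Nerode: `α ≡ᶜ_L β` iff
`α ≡_L β`, `α` and `β` end with the same letter (or are both `ε`), and every
`γ ∈ Pref(L)` strictly co-lexicographically between `α` and `β` satisfies `γ ≡_L α`. -/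
def MNc [LinearOrder A] (L : Set (List A)) (α β : List A) : Prop :=
  MNrel L α β ∧ α.getLast? = β.getLast? ∧
  ∀ γ ∈ PrefSet L,
    ((ColexLt α γ ∧ ColexLt γ β) ∨ (ColexLt β γ ∧ ColexLt γ α)) → MNrel L γ α

section Lemmas
set_option linter.unusedSectionVars false
variable [LinearOrder A] {E : V → A → V → Prop} {s : V} {r : V → V → Prop}

lemma reaches_nil_eq' {γ : List A} {v : V} (h : Reaches E s γ v) : γ = [] → v = s := by
  induction h with
  | nil => intro; rfl
  | snoc => intro h; simp at h

lemma reaches_nil_eq {v : V} (h : Reaches E s [] v) : v = s := reaches_nil_eq' h rfl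

lemma reaches_snoc_inv' {γ : List A} {v : V} (h : Reaches E s γ v) :
    ∀ α a, γ = α ++ [a] → ∃ u, Reaches E s α u ∧ E u a v := by
  induction h with
  | nil => intro α a h; exact absurd h (by simp)
  | snoc h1 h2 _ =>
    intro α a h
    obtain ⟨h3, h4⟩ := List.append_inj' h rfl
    obtain rfl := h3
    injection h4 with h5
    subst h5
    exact ⟨_, h1, h2⟩

lemma reaches_snoc_inv {α : List A} {a : A} {v : V} (h : Reaches E s (α ++ [a]) v) :
    ∃ u, Reaches E s α u ∧ E u a v := reaches_snoc_inv' h α a rfl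

lemma reaches_append_inv {α δ : List A} {v : V} (h : Reaches E s (α ++ δ) v) :
    ∃ m, Reaches E s α m ∧ Reaches E m δ v := by
  induction δ using List.reverseRecOn generalizing v with
  | nil => exact ⟨v, by simpa using h, Reaches.nil⟩
  | append_singleton δ' d ih =>
    rw [← List.append_assoc] at h
    obtain ⟨u, hu, he⟩ := reaches_snoc_inv h
    obtain ⟨m, hm, hm'⟩ := ih hu
    exact ⟨m, hm, hm'.snoc he⟩

lemma reaches_trans {α β : List A} {m v : V} (h1 : Reaches E s α m) (h2 : Reaches E m β v) :
    Reaches E s (α ++ β) v := by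
  induction h2 with
  | nil => simpa using h1
  | snoc _ he ih => rw [← List.append_assoc]; exact ih.snoc he

lemma colex_nil_concat (β : List A) (b : A) : ColexLt [] (β ++ [b]) := by
  unfold ColexLt
  rw [List.reverse_append]
  exact List.Lex.nil

lemma colex_concat_of_lt {a b : A} (α β : List A) (h : a < b) :
    ColexLt (α ++ [a]) (β ++ [b]) := by
  unfold ColexLt
  rw [List.reverse_append, List.reverse_append]
  exact List.Lex.rel h

lemma colex_concat_of_colex {a : A} {α β : List A} (h : ColexLt α β) :
    ColexLt (α ++ [a]) (β ++ [a]) := by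
  unfold ColexLt at *
  rw [List.reverse_append, List.reverse_append]
  exact List.Lex.cons h

lemma colex_concat_inv {a b : A} {α β : List A} (h : ColexLt (α ++ [a]) (β ++ [b])) :
    a < b ∨ (a = b ∧ ColexLt α β) := by
  unfold ColexLt at h
  rw [List.reverse_append, List.reverse_append] at h
  cases h with
  | cons h => exact Or.inr ⟨rfl, h⟩
  | rel h => exact Or.inl h

lemma colex_asymm {α β : List A} (h : ColexLt α β) : ¬ ColexLt β α :=
  asymm (r := List.Lex (· < · : A → A → Prop)) h

lemma colex_trichotomy {α β : List A} (h : α ≠ β) : ColexLt α β ∨ ColexLt β α := by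
  rcases trichotomous_of (List.Lex (· < · : A → A → Prop)) α.reverse β.reverse with h1 | h1 | h1
  · exact Or.inl h1
  · exact absurd (List.reverse_injective h1) h
  · exact Or.inr h1

/-- Input consistency: all edges into a state carry the same label. -/
lemma wheeler_input_consistent (hW : WheelerRel E r) {u1 u2 v : V} {a b : A}
    (h1 : E u1 a v) (h2 : E u2 b v) : a = b := by
  obtain ⟨⟨hirr, -, -⟩, -, h3, -⟩ := hW
  rcases lt_trichotomy a b with h | h | h
  · exact absurd (h3 _ _ _ _ _ _ h1 h2 h) (hirr v)
  · exact h
  · exact absurd (h3 _ _ _ _ _ _ h2 h1 h) (hirr v)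

/-- The key Wheeler path-coherence lemma. -/
lemma wheeler_main (hW : WheelerRel E r) (hsrc : ∀ u a, ¬ E u a s) :
    ∀ n (α β : List A) (u v : V), α.length + β.length ≤ n →
      Reaches E s α u → Reaches E s β v → r u v →
      ColexLt α β ∨ (Reaches E s β u ∧ Reaches E s α v) := by
  obtain ⟨⟨hirr, htr, htot⟩, hw2, hw3, hw4⟩ := hW
  intro n
  induction n with
  | zero =>
    intro α β u v hlen hα hβ hr
    rw [Nat.le_zero, Nat.add_eq_zero] at hlen
    obtain rfl := List.length_eq_zero_iff.mp hlen.1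
    obtain rfl := List.length_eq_zero_iff.mp hlen.2
    obtain rfl := reaches_nil_eq hα
    obtain rfl := reaches_nil_eq hβ
    exact absurd hr (hirr _)
  | succ n ih =>
    intro α β u v hlen hα hβ hr
    rcases List.eq_nil_or_concat α with rfl | ⟨α', a, rfl⟩
    · obtain rfl := reaches_nil_eq hα
      rcases List.eq_nil_or_concat β with rfl | ⟨β', b, rfl⟩
      · obtain rfl := reaches_nil_eq hβ
        exact absurd hr (hirr _)
      · exact Or.inl (by simpa using colex_nil_concat β' b)
    · simp only [List.concat_eq_append] at hα hlen ⊢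
      obtain ⟨u', hu', heu⟩ := reaches_snoc_inv hα
      rcases List.eq_nil_or_concat β with rfl | ⟨β', b, rfl⟩
      · rw [reaches_nil_eq hβ] at hr
        have hsu : r s u := hw2 s u (hsrc) ⟨u', a, heu⟩
        exact absurd (htr _ _ _ hr hsu) (hirr u)
      · simp only [List.concat_eq_append] at hβ hlen ⊢
        obtain ⟨v', hv', hev⟩ := reaches_snoc_inv hβ
        rcases lt_trichotomy a b with hab | rfl | hab
        · exact Or.inl (colex_concat_of_lt α' β' hab)
        · by_cases huv : u' = v'
          · subst huv
            exact Or.inr ⟨hv'.snoc heu, hu'.snoc hev⟩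
          · rcases htot u' v' huv with h' | h'
            · have hlen' : α'.length + β'.length ≤ n := by
                simp only [List.length_append, List.length_singleton] at hlen
                omega
              rcases ih α' β' u' v' hlen' hu' hv' h' with hc | ⟨h1, h2⟩
              · exact Or.inl (colex_concat_of_colex hc)
              · exact Or.inr ⟨h1.snoc heu, h2.snoc hev⟩
            · rcases hw4 v' v u' u a hev heu h' with h'' | h''
              · exact absurd (htr _ _ _ hr h'') (hirr u)
              · rw [h''] at hr
                exact absurd hr (hirr u)
        · have := hw3 _ _ _ _ _ _ hev heu hab
          exact absurd (htr _ _ _ hr this) (hirr u)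

end Lemmas

section Lemmas2
set_option linter.unusedSectionVars false
variable [LinearOrder A] {E : V → A → V → Prop} {F : Set V} {s : V} {r : V → V → Prop}

lemma istr_nonempty {α : List A} (hα : α ∈ PrefSet (Lang E F s)) :
    ∃ u, Reaches E s α u := by
  obtain ⟨δ, w, hw, hr⟩ := hα
  obtain ⟨m, hm, -⟩ := reaches_append_inv hr
  exact ⟨m, hm⟩

lemma lang_mono {α β : List A} (h : Istr E s α ⊆ Istr E s β) {γ : List A}
    (hm : α ++ γ ∈ Lang E F s) : β ++ γ ∈ Lang E F s := by
  obtain ⟨w, hw, hr⟩ := hm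
  obtain ⟨m, hm1, hm2⟩ := reaches_append_inv hr
  exact ⟨w, hw, reaches_trans (h hm1) hm2⟩

lemma mnrel_of_istr {α β : List A} (h : Istr E s α = Istr E s β) :
    MNrel (Lang E F s) α β :=
  fun γ => ⟨lang_mono h.le, lang_mono h.ge⟩

lemma wheeler_interval (hW : WheelerRel E r) (hsrc : ∀ u a, ¬ E u a s)
    {α β γ : List A} {u v : V} (hαv : Reaches E s α v) (hβv : Reaches E s β v)
    (hγu : Reaches E s γ u) (h1 : ColexLt α γ) (h2 : ColexLt γ β) :
    Reaches E s γ v := by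
  by_cases huv : u = v
  · exact huv ▸ hγu
  · rcases hW.1.2.2 u v huv with h | h
    · rcases wheeler_main hW hsrc _ γ α u v le_rfl hγu hαv h with hc | hp
      · exact absurd hc (colex_asymm h1)
      · exact hp.2
    · rcases wheeler_main hW hsrc _ β γ v u le_rfl hβv hγu h with hc | hp
      · exact absurd hc (colex_asymm h2)
      · exact hp.1

lemma istr_between (hW : WheelerRel E r) (hsrc : ∀ u a, ¬ E u a s)
    {α β γ : List A} (hIs : Istr E s α = Istr E s β)
    (hu : ∃ u, Reaches E s γ u) (hv : ∃ v, Reaches E s α v)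
    (h1 : ColexLt α γ) (h2 : ColexLt γ β) : Istr E s γ = Istr E s α := by
  ext x
  simp only [Istr, Set.mem_setOf_eq]
  constructor
  · intro hx
    obtain ⟨v, hv⟩ := hv
    by_cases hxa : Reaches E s α x
    · exact hxa
    have hβv : Reaches E s β v := by
      have : v ∈ Istr E s β := hIs ▸ (show v ∈ Istr E s α from hv)
      exact this
    have hxv : x ≠ v := fun h => hxa (h ▸ hv)
    rcases hW.1.2.2 x v hxv with h | h
    · rcases wheeler_main hW hsrc _ γ α x v le_rfl hx hv h with hc | hp
      · exact absurd hc (colex_asymm h1)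
      · exact hp.1
    · rcases wheeler_main hW hsrc _ β γ v x le_rfl hβv hx h with hc | hp
      · exact absurd hc (colex_asymm h2)
      · have : x ∈ Istr E s α := hIs ▸ (show x ∈ Istr E s β from hp.2)
        exact this
  · intro hx
    obtain ⟨u, hu⟩ := hu
    have hβx : Reaches E s β x := by
      have : x ∈ Istr E s β := hIs ▸ (show x ∈ Istr E s α from hx)
      exact this
    exact wheeler_interval hW hsrc hx hβx hu h1 h2

lemma getLast_eq_of_istr (hW : WheelerRel E r) (hsrc : ∀ u a, ¬ E u a s)
    {α β : List A} (hIs : Istr E s α = Istr E s β)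
    (hne : ∃ u, Reaches E s α u) : α.getLast? = β.getLast? := by
  have key : ∀ (δ : List A) (δ' : List A) (d : A), Istr E s [] = Istr E s (δ' ++ [d]) → False := by
    intro δ δ' d h
    have : s ∈ Istr E s (δ' ++ [d]) := h ▸ (show s ∈ Istr E s [] from Reaches.nil)
    obtain ⟨u, -, he⟩ := reaches_snoc_inv (show Reaches E s (δ' ++ [d]) s from this)
    exact hsrc u d he
  rcases List.eq_nil_or_concat α with rfl | ⟨α', a, rfl⟩ <;>
    rcases List.eq_nil_or_concat β with rfl | ⟨β', b, rfl⟩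
  · rfl
  · simp only [List.concat_eq_append] at hIs
    exact absurd hIs (fun h => key β' β' b h)
  · simp only [List.concat_eq_append] at hIs
    exact absurd hIs.symm (fun h => key α' α' a h)
  · simp only [List.concat_eq_append] at hIs hne ⊢
    obtain ⟨u, hu⟩ := hne
    obtain ⟨u1, -, he1⟩ := reaches_snoc_inv hu
    have hu' : u ∈ Istr E s (β' ++ [b]) := hIs ▸ (show u ∈ Istr E s (α' ++ [a]) from hu)
    obtain ⟨u2, -, he2⟩ := reaches_snoc_inv (show Reaches E s (β' ++ [b]) u from hu')
    have hab : a = b := wheeler_input_consistent hW he1 he2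
    simp [hab]

lemma mnc_of_istr (hW : WheelerRel E r) (hsrc : ∀ u a, ¬ E u a s)
    {α β : List A} (hα : α ∈ PrefSet (Lang E F s)) (hβ : β ∈ PrefSet (Lang E F s))
    (hIs : Istr E s α = Istr E s β) : MNc (Lang E F s) α β := by
  refine ⟨mnrel_of_istr hIs, getLast_eq_of_istr hW hsrc hIs (istr_nonempty hα), ?_⟩
  rintro γ hγ (⟨h1, h2⟩ | ⟨h1, h2⟩)
  · exact mnrel_of_istr (istr_between hW hsrc hIs (istr_nonempty hγ) (istr_nonempty hα) h1 h2)
  · have := istr_between hW hsrc hIs.symm (istr_nonempty hγ) (istr_nonempty hβ) h1 h2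
    exact mnrel_of_istr (this.trans hIs.symm)

lemma mnc_trans {L : Set (List A)} {α β δ : List A}
    (h1 : MNc L α β) (h2 : MNc L β δ) : MNc L α δ := by
  obtain ⟨hr1, hg1, hc1⟩ := h1
  obtain ⟨hr2, hg2, hc2⟩ := h2
  refine ⟨fun γ => (hr1 γ).trans (hr2 γ), hg1.trans hg2, ?_⟩
  rintro γ hγ (⟨ha, hd⟩ | ⟨hd, ha⟩)
  · by_cases hgb : γ = β
    · subst hgb; exact fun x => (hr1 x).symm
    · rcases colex_trichotomy hgb with hγβ | hβγ
      · exact hc1 γ hγ (Or.inl ⟨ha, hγβ⟩)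
      · have h3 := hc2 γ hγ (Or.inl ⟨hβγ, hd⟩)
        exact fun x => (h3 x).trans (hr1 x).symm
  · by_cases hgb : γ = β
    · subst hgb; exact fun x => (hr1 x).symm
    · rcases colex_trichotomy hgb with hγβ | hβγ
      · have h3 := hc2 γ hγ (Or.inr ⟨hd, hγβ⟩)
        exact fun x => (h3 x).trans (hr1 x).symm
      · exact hc1 γ hγ (Or.inr ⟨hβγ, ha⟩)

end Lemmas2

/-- If `L` is recognized by a Wheeler NFA, then `≡ᶜ_L` has finite index on `Pref(L)`. -/
theorem stmt12 {V A : Type*} [Fintype V] [LinearOrder A]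
    (E : V → A → V → Prop) (F : Set V) (s : V) (r : V → V → Prop)
    (hsrc : ∀ u a, ¬ E u a s)
    (hsuniq : ∀ x : V, (∀ u a, ¬ E u a x) → x = s)
    (hreach : ∀ x : V, ∃ α, Reaches E s α x)
    (hW : WheelerRel E r)
    (L : Set (List A)) (hL : Lang E F s = L) :
    {Cl : Set (List A) | ∃ α ∈ PrefSet L, Cl = {β ∈ PrefSet L | MNc L α β}}.Finite := by
  subst hL
  apply Set.Finite.subset (Set.Finite.image
    (fun I : Set V => {β ∈ PrefSet (Lang E F s) |
      ∃ α' ∈ PrefSet (Lang E F s), Istr E s α' = I ∧ MNc (Lang E F s) α' β})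
    (Set.finite_univ))
  rintro Cl ⟨α, hα, rfl⟩
  refine ⟨Istr E s α, Set.mem_univ _, ?_⟩
  ext β
  simp only [Set.mem_setOf_eq]
  constructor
  · rintro ⟨hβ, α', hα', hI, hmnc⟩
    exact ⟨hβ, mnc_trans (mnc_of_istr hW hsrc hα hα' hI.symm) hmnc⟩
  · rintro ⟨hβ, hmnc⟩
    exact ⟨hβ, α, hα, rfl, hmnc⟩
end

section
/- (Myhill-Nerode theorem for Wheeler languages) For a language L ⊆ Σ*, the following are equivalent: (1) L is recognized by a Wheeler NFA; (2) the input-consistent convex refinement ≡ᶜ_L of the Myhill-Nerode relation on Pref(L) has finite index; (3) L is a union of classes of a convex, input-consistent, right-invariant equivalence of finite index on Pref(L); (4) L is recognized by a Wheeler DFA. -/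
variable {V : Type*} {A : Type*}

/-- `L` is recognized by a Wheeler NFA. -/
def WheelerNFARecog {A : Type*} [LinearOrder A] (L : Set (List A)) : Prop :=
  ∃ (W : Type) (_ : Fintype W) (E : W → A → W → Prop) (F : Set W) (s : W)
    (r : W → W → Prop),
    (∀ u a, ¬ E u a s) ∧
    (∀ x : W, (∀ u a, ¬ E u a x) → x = s) ∧
    (∀ x : W, ∃ α, Reaches E s α x) ∧
    WheelerRel E r ∧
    Lang E F s = L

/-- `L` is recognized by a Wheeler DFA. -/
def WheelerDFARecog {A : Type*} [LinearOrder A] (L : Set (List A)) : Prop :=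
  ∃ (W : Type) (_ : Fintype W) (E : W → A → W → Prop) (F : Set W) (s : W)
    (r : W → W → Prop),
    (∀ u a v v', E u a v → E u a v' → v = v') ∧
    (∀ u a, ¬ E u a s) ∧
    (∀ x : W, (∀ u a, ¬ E u a x) → x = s) ∧
    (∀ x : W, ∃ α, Reaches E s α x) ∧
    WheelerRel E r ∧
    Lang E F s = L

/-- `≡ᶜ_L` has finite index on `Pref(L)`. -/
def MNcFiniteIndex {A : Type*} [LinearOrder A] (L : Set (List A)) : Prop :=
  {Cl : Set (List A) | ∃ α ∈ PrefSet L, Cl = {β ∈ PrefSet L | MNc L α β}}.Finite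

/-- `L` is a union of classes of a convex, input-consistent, right-invariant
equivalence of finite index on `Pref(L)`. -/
def UnionOfNiceEquiv {A : Type*} [LinearOrder A] (L : Set (List A)) : Prop :=
  ∃ sim : List A → List A → Prop,
    (∀ α β, sim α β → α ∈ PrefSet L ∧ β ∈ PrefSet L) ∧
    (∀ α ∈ PrefSet L, sim α α) ∧
    (∀ α β, sim α β → sim β α) ∧
    (∀ α β γ, sim α β → sim β γ → sim α γ) ∧
    (∀ α β γ, sim α β → (α ++ γ) ∈ PrefSet L →
      ((β ++ γ) ∈ PrefSet L ∧ sim (α ++ γ) (β ++ γ))) ∧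
    (∀ α β γ, sim α γ → β ∈ PrefSet L → ColexLt α β → ColexLt β γ → sim α β) ∧
    (∀ α β, sim α β → α.getLast? = β.getLast?) ∧
    {Cl : Set (List A) | ∃ α ∈ PrefSet L, Cl = {β | sim α β}}.Finite ∧
    (∀ α β, α ∈ L → sim α β → β ∈ L)


/-!
In a Wheeler NFA the strings reaching a fixed state form a colex interval: the Wheeler axioms
propagate the order of states along equally labelled paths. So as `α` runs through `Pref(L)` in
colex order, the set `I_α` of states it reaches changes only when `α` enters or leaves one of
finitely many intervals. The pair formed by `I_α` and the set of states whose interval lies above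
`α` thus takes finitely many values, and strings sharing it are `≡ᶜ_L`-equivalent: (1) ⇒ (2).
`≡ᶜ_L` on `Pref(L)` is itself an equivalence as in (3), and every such equivalence refines
`≡ᶜ_L`: (2) ⇔ (3). For (3) ⇒ (4), the quotient automaton of such an equivalence is deterministic
by right invariance, and convexity makes distinct classes colex-separated, so ordering the classes
colexicographically is a Wheeler order. A Wheeler DFA is a Wheeler NFA.
-/

section Reaches

variable {E : V → A → V → Prop} {s v : V}

theorem reaches_nil_iff : Reaches E s [] v ↔ v = s := by
  refine ⟨fun h => ?_, fun h => h ▸ .nil⟩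
  generalize hl : ([] : List A) = l at h
  cases h with
  | nil => rfl
  | snoc => simp at hl

theorem reaches_snoc_iff {α : List A} {a : A} :
    Reaches E s (α ++ [a]) v ↔ ∃ u, Reaches E s α u ∧ E u a v := by
  refine ⟨fun h => ?_, fun ⟨_, hu, he⟩ => hu.snoc he⟩
  generalize hl : α ++ [a] = l at h
  cases h with
  | nil => simp at hl
  | snoc hu he =>
    obtain ⟨rfl, rfl⟩ : α = _ ∧ a = _ := by simpa using List.append_inj' hl rfl
    exact ⟨_, hu, he⟩

theorem reaches_append_iff {α γ : List A} :
    Reaches E s (α ++ γ) v ↔ ∃ u, Reaches E s α u ∧ Reaches E u γ v := by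
  induction γ using List.reverseRecOn generalizing v with
  | nil => simp [reaches_nil_iff]
  | append_singleton γ a ih =>
    simp only [← List.append_assoc, reaches_snoc_iff, ih]
    grind

theorem Reaches.map {V' : Type*} {E' : V' → A → V' → Prop} (f : V → V')
    (hf : ∀ u a w, E u a w → E' (f u) a (f w)) {α : List A} (h : Reaches E s α v) :
    Reaches E' (f s) α (f v) := by
  induction h with
  | nil => exact .nil
  | snoc _ he ih => exact ih.snoc (hf _ _ _ he)

theorem eq_nil_of_reaches_self (hs : ∀ u a, ¬ E u a s) {α : List A} (h : Reaches E s α s) :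
    α = [] := by
  cases h with
  | nil => rfl
  | snoc _ he => exact absurd he (hs _ _)

end Reaches

section Colex

variable [LinearOrder A] {α β γ : List A}

theorem colexLt_iff : ColexLt α β ↔ α.reverse < β.reverse := Iff.rfl

theorem ColexLt.trans (h₁ : ColexLt α β) (h₂ : ColexLt β γ) : ColexLt α γ :=
  lt_trans (colexLt_iff.1 h₁) h₂

theorem colexLt_irrefl (α : List A) : ¬ ColexLt α α := lt_irrefl α.reverse

theorem ColexLt.not_lt (h : ColexLt α β) : ¬ ColexLt β α := fun h' => colexLt_irrefl α (h.trans h')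

theorem colexLt_or_colexLt_of_ne (h : α ≠ β) : ColexLt α β ∨ ColexLt β α :=
  lt_or_gt_of_ne (fun h' => h (List.reverse_injective h'))

theorem not_colexLt_nil (α : List A) : ¬ ColexLt α [] := by
  simp [colexLt_iff]

theorem colexLt_snoc_iff {a b : A} :
    ColexLt (α ++ [a]) (β ++ [b]) ↔ a < b ∨ a = b ∧ ColexLt α β := by
  simp only [colexLt_iff, List.reverse_append, List.reverse_singleton, List.singleton_append,
    List.cons_lt_cons_iff]

theorem nil_colexLt_snoc (a : A) : ColexLt [] (α ++ [a]) := by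
  simp [colexLt_iff]

theorem List.exists_eq_append_of_lt_of_lt {s t₁ t₂ m : List A} (h₁ : s ++ t₁ < m)
    (h₂ : m < s ++ t₂) : ∃ m', m = s ++ m' ∧ t₁ < m' ∧ m' < t₂ := by
  induction s generalizing m with
  | nil => exact ⟨m, rfl, h₁, h₂⟩
  | cons a s ih =>
    obtain _ | ⟨b, m⟩ := m
    · exact absurd h₁ (List.not_lt_nil _)
    simp only [List.cons_append, List.cons_lt_cons_iff] at h₁ h₂
    obtain rfl : a = b := by grind
    simp only [lt_irrefl, true_and, false_or] at h₁ h₂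
    obtain ⟨m', rfl, h⟩ := ih h₁ h₂
    exact ⟨m', rfl, h⟩

theorem exists_eq_append_of_colexLt_of_colexLt {μ : List A} (h₁ : ColexLt (α ++ γ) μ)
    (h₂ : ColexLt μ (β ++ γ)) : ∃ μ', μ = μ' ++ γ ∧ ColexLt α μ' ∧ ColexLt μ' β := by
  rw [colexLt_iff, List.reverse_append] at h₁ h₂
  obtain ⟨m, hm, h⟩ := List.exists_eq_append_of_lt_of_lt h₁ h₂
  refine ⟨m.reverse, ?_, by simpa [colexLt_iff] using h⟩
  simpa using congrArg List.reverse hm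

theorem getLast?_eq_of_colexLt_of_colexLt (h₁ : ColexLt α β) (h₂ : ColexLt β γ)
    (h : α.getLast? = γ.getLast?) : α.getLast? = β.getLast? := by
  obtain rfl | ⟨α, a, rfl⟩ := List.eq_nil_or_concat' α
  · obtain rfl : γ = [] := by simpa [eq_comm] using h
    exact absurd h₂ (not_colexLt_nil β)
  obtain ⟨γ, rfl⟩ : ∃ γ', γ = γ' ++ [a] := by
    simpa [eq_comm, List.getLast?_eq_some_iff] using h
  obtain ⟨β, rfl, -⟩ := exists_eq_append_of_colexLt_of_colexLt (by simpa using h₁) h₂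
  simp

end Colex

section MyhillNerode

variable {L : Set (List A)} {α β γ : List A}

theorem mem_prefSet_of_mem (h : α ∈ L) : α ∈ PrefSet L := ⟨[], by simpa using h⟩

theorem mem_prefSet_of_append_mem (h : α ++ γ ∈ PrefSet L) : α ∈ PrefSet L :=
  let ⟨δ, hδ⟩ := h
  ⟨γ ++ δ, by simpa using hδ⟩

theorem MNrel.symm (h : MNrel L α β) : MNrel L β α := fun γ => (h γ).symm

theorem MNrel.trans (h₁ : MNrel L α β) (h₂ : MNrel L β γ) : MNrel L α γ :=
  fun δ => (h₁ δ).trans (h₂ δ)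

theorem MNrel.append_right (h : MNrel L α β) (γ : List A) : MNrel L (α ++ γ) (β ++ γ) :=
  fun δ => by simpa using h (γ ++ δ)

theorem MNrel.mem_prefSet (h : MNrel L α β) (hα : α ∈ PrefSet L) : β ∈ PrefSet L :=
  let ⟨δ, hδ⟩ := hα
  ⟨δ, (h δ).1 hδ⟩

variable [LinearOrder A]

theorem mnc_refl (L : Set (List A)) (α : List A) : MNc L α α :=
  ⟨fun _ => Iff.rfl, rfl, fun _ _ h => by
    rcases h with ⟨h₁, h₂⟩ | ⟨h₁, h₂⟩ <;> exact absurd h₂ h₁.not_lt⟩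

theorem MNc.symm (h : MNc L α β) : MNc L β α :=
  ⟨h.1.symm, h.2.1.symm, fun δ hδ hb => (h.2.2 δ hδ hb.symm).trans h.1⟩

theorem MNc.trans (h₁ : MNc L α β) (h₂ : MNc L β γ) : MNc L α γ := by
  refine ⟨h₁.1.trans h₂.1, h₁.2.1.trans h₂.2.1, fun δ hδ hb => ?_⟩
  obtain rfl | hne := eq_or_ne δ β
  · exact h₁.1.symm
  have h₂' := fun hb => (h₂.2.2 δ hδ hb).trans h₁.1.symm
  rcases hb with ⟨hαδ, hδγ⟩ | ⟨hγδ, hδα⟩ <;> rcases colexLt_or_colexLt_of_ne hne with h | h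
  exacts [h₁.2.2 δ hδ (.inl ⟨hαδ, h⟩), h₂' (.inl ⟨h, hδγ⟩), h₂' (.inr ⟨hγδ, h⟩),
    h₁.2.2 δ hδ (.inr ⟨h, hδα⟩)]

theorem MNc.append_right (h : MNc L α β) (γ : List A) : MNc L (α ++ γ) (β ++ γ) := by
  refine ⟨h.1.append_right γ, by simp [List.getLast?_append, h.2.1], fun μ hμ hb => ?_⟩
  obtain ⟨μ, rfl, hμ'⟩ : ∃ μ', μ = μ' ++ γ ∧
      (ColexLt α μ' ∧ ColexLt μ' β ∨ ColexLt β μ' ∧ ColexLt μ' α) := by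
    rcases hb with ⟨h₁, h₂⟩ | ⟨h₁, h₂⟩ <;>
      obtain ⟨μ, rfl, hb⟩ := exists_eq_append_of_colexLt_of_colexLt h₁ h₂
    exacts [⟨μ, rfl, .inl hb⟩, ⟨μ, rfl, .inr hb⟩]
  exact (h.2.2 μ (mem_prefSet_of_append_mem hμ) hμ').append_right γ

theorem MNc.of_colexLt_of_colexLt (h : MNc L α γ) (hβ : β ∈ PrefSet L) (h₁ : ColexLt α β)
    (h₂ : ColexLt β γ) : MNc L α β := by
  refine ⟨(h.2.2 β hβ (.inl ⟨h₁, h₂⟩)).symm, getLast?_eq_of_colexLt_of_colexLt h₁ h₂ h.2.1,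
    fun δ hδ hb => ?_⟩
  rcases hb with ⟨hαδ, hδβ⟩ | ⟨hβδ, hδα⟩
  · exact h.2.2 δ hδ (.inl ⟨hαδ, hδβ.trans h₂⟩)
  · exact absurd (hβδ.trans hδα) h₁.not_lt

theorem mncFiniteIndex_of_finite_image {X : Type*} (f : List A → X)
    (hf : (f '' PrefSet L).Finite)
    (hmnc : ∀ α ∈ PrefSet L, ∀ β ∈ PrefSet L, f α = f β → MNc L α β) :
    MNcFiniteIndex L := by
  refine (hf.image fun x => {β ∈ PrefSet L | ∃ α ∈ PrefSet L, f α = x ∧ MNc L α β}).subset ?_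
  rintro _ ⟨α, hα, rfl⟩
  refine ⟨f α, ⟨α, hα, rfl⟩, Set.ext fun β => ?_⟩
  exact ⟨fun ⟨hβ, α', hα', hf, h⟩ => ⟨hβ, (hmnc α hα α' hα' hf.symm).trans h⟩,
    fun ⟨hβ, h⟩ => ⟨hβ, α, hα, rfl, h⟩⟩

end MyhillNerode

section WheelerEquiv

variable [LinearOrder A] {L : Set (List A)} {α β γ : List A}

def relClasses (L : Set (List A)) (sim : List A → List A → Prop) : Set (Set (List A)) :=
  {Cl | ∃ α ∈ PrefSet L, Cl = {β | sim α β}}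

structure IsWheelerEquiv (L : Set (List A)) (sim : List A → List A → Prop) : Prop where
  mem_prefSet : ∀ {α β}, sim α β → α ∈ PrefSet L ∧ β ∈ PrefSet L
  refl : ∀ α ∈ PrefSet L, sim α α
  symm : ∀ {α β}, sim α β → sim β α
  trans : ∀ {α β γ}, sim α β → sim β γ → sim α γ
  append_right : ∀ {α β} (γ : List A), sim α β → α ++ γ ∈ PrefSet L →
    β ++ γ ∈ PrefSet L ∧ sim (α ++ γ) (β ++ γ)
  convex : ∀ {α β γ}, sim α γ → β ∈ PrefSet L → ColexLt α β → ColexLt β γ → sim α β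
  getLast?_eq : ∀ {α β}, sim α β → α.getLast? = β.getLast?
  finite_classes : (relClasses L sim).Finite
  mem_of_mem : ∀ {α β}, α ∈ L → sim α β → β ∈ L

theorem unionOfNiceEquiv_iff : UnionOfNiceEquiv L ↔ ∃ sim, IsWheelerEquiv L sim := by
  constructor
  · rintro ⟨sim, h₁, h₂, h₃, h₄, h₅, h₆, h₇, h₈, h₉⟩
    exact ⟨sim, h₁ _ _, h₂, h₃ _ _, h₄ _ _ _, h₅ _ _, h₆ _ _ _, h₇ _ _, h₈, h₉ _ _⟩
  · rintro ⟨sim, h⟩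
    exact ⟨sim, fun _ _ => h.1, h.2, fun _ _ => h.3, fun _ _ _ => h.4, fun _ _ => h.5,
      fun _ _ _ => h.6, fun _ _ => h.7, h.8, fun _ _ => h.9⟩

namespace IsWheelerEquiv

variable {sim : List A → List A → Prop}

theorem mnrel (hsim : IsWheelerEquiv L sim) (h : sim α β) : MNrel L α β := fun γ =>
  ⟨fun hγ => hsim.mem_of_mem hγ (hsim.append_right γ h (mem_prefSet_of_mem hγ)).2,
    fun hγ => hsim.mem_of_mem hγ (hsim.append_right γ (hsim.symm h) (mem_prefSet_of_mem hγ)).2⟩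

theorem mnc (hsim : IsWheelerEquiv L sim) (h : sim α β) : MNc L α β := by
  refine ⟨hsim.mnrel h, hsim.getLast?_eq h, fun δ hδ hb => ?_⟩
  rcases hb with ⟨h₁, h₂⟩ | ⟨h₁, h₂⟩
  · exact (hsim.mnrel (hsim.convex h hδ h₁ h₂)).symm
  · exact (hsim.mnrel (hsim.convex (hsim.symm h) hδ h₁ h₂)).symm.trans (hsim.mnrel h).symm

theorem mncFiniteIndex (hsim : IsWheelerEquiv L sim) : MNcFiniteIndex L := by
  refine mncFiniteIndex_of_finite_image (fun α => {β | sim α β})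
    (hsim.finite_classes.subset ?_) fun α _ β hβ hαβ => hsim.mnc ?_
  · rintro _ ⟨α, hα, rfl⟩
    exact ⟨α, hα, rfl⟩
  · exact (Set.ext_iff.1 hαβ β).2 (hsim.refl β hβ)

end IsWheelerEquiv

theorem isWheelerEquiv_mnc (hL : MNcFiniteIndex L) :
    IsWheelerEquiv L fun α β => α ∈ PrefSet L ∧ β ∈ PrefSet L ∧ MNc L α β where
  mem_prefSet h := ⟨h.1, h.2.1⟩
  refl α hα := ⟨hα, hα, mnc_refl L α⟩
  symm h := ⟨h.2.1, h.1, h.2.2.symm⟩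
  trans h₁ h₂ := ⟨h₁.1, h₂.2.1, h₁.2.2.trans h₂.2.2⟩
  append_right γ h hα := by
    have hβ := h.2.2.1.append_right γ |>.mem_prefSet hα
    exact ⟨hβ, hα, hβ, h.2.2.append_right γ⟩
  convex h hβ h₁ h₂ := ⟨h.1, hβ, h.2.2.of_colexLt_of_colexLt hβ h₁ h₂⟩
  getLast?_eq h := h.2.2.2.1
  finite_classes := hL.subset fun _ ⟨α, hα, hCl⟩ => ⟨α, hα, hCl.trans (by ext; simp [hα])⟩
  mem_of_mem hα h := by simpa using (h.2.2.1 []).1 (by simpa using hα)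

end WheelerEquiv

section WheelerNFA

variable {E : V → A → V → Prop} {s : V} {α β μ : List A}

theorem istr_nonempty_of_mem_prefSet {F : Set V} (h : α ∈ PrefSet (Lang E F s)) :
    (Istr E s α).Nonempty := by
  obtain ⟨γ, w, -, hw⟩ := h
  obtain ⟨u, hu, -⟩ := reaches_append_iff.1 hw
  exact ⟨u, hu⟩

theorem mnrel_lang_of_istr_eq {F : Set V} (h : Istr E s α = Istr E s β) :
    MNrel (Lang E F s) α β := fun γ => by
  have hαβ : ∀ u, Reaches E s α u ↔ Reaches E s β u := Set.ext_iff.1 h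
  simp only [Lang, Set.mem_ofPred_eq, reaches_append_iff, hαβ]

variable [LinearOrder A] {r : V → V → Prop}

def statesAbove (E : V → A → V → Prop) (s : V) (α : List A) : Set V :=
  {u | ∀ δ, Reaches E s δ u → ColexLt α δ}

namespace WheelerRel

theorem label_eq (hW : WheelerRel E r) {u v x : V} {a b : A} (h₁ : E u a x) (h₂ : E v b x) :
    a = b := by
  by_contra hne
  rcases lt_or_gt_of_ne hne with h | h
  · exact hW.1.1 x (hW.2.2.1 _ _ _ _ _ _ h₁ h₂ h)
  · exact hW.1.1 x (hW.2.2.1 _ _ _ _ _ _ h₂ h₁ h)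

/-- The last alternative is forced when the two paths pass through a common state and leave it
along equally labelled edges, whose targets the Wheeler axioms do not order. -/
theorem le_or_reaches_of_colexLt (hW : WheelerRel E r) (hs : ∀ u a, ¬ E u a s) {u v : V}
    (h : ColexLt α β) (hu : Reaches E s α u) (hv : Reaches E s β v) :
    r u v ∨ u = v ∨ Reaches E s β u ∧ Reaches E s α v := by
  induction β using List.reverseRecOn generalizing α u v with
  | nil => exact absurd h (not_colexLt_nil α)
  | append_singleton β b ih =>
    obtain ⟨v', hv', hev⟩ := reaches_snoc_iff.1 hv
    obtain rfl | ⟨α, a, rfl⟩ := List.eq_nil_or_concat' α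
    · obtain rfl := reaches_nil_iff.1 hu
      exact .inl (hW.2.1 _ _ hs ⟨v', b, hev⟩)
    obtain ⟨u', hu', heu⟩ := reaches_snoc_iff.1 hu
    rcases colexLt_snoc_iff.1 h with hab | ⟨rfl, hαβ⟩
    · exact .inl (hW.2.2.1 _ _ _ _ _ _ heu hev hab)
    rcases ih hαβ hu' hv' with hr | rfl | ⟨hβu', hαv'⟩
    · exact (hW.2.2.2 _ _ _ _ _ heu hev hr).imp_right .inl
    · exact .inr (.inr ⟨hv'.snoc heu, hu'.snoc hev⟩)
    · exact .inr (.inr ⟨hβu'.snoc heu, hαv'.snoc hev⟩)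

theorem reaches_of_colexLt_of_colexLt (hW : WheelerRel E r) (hs : ∀ u a, ¬ E u a s)
    {γ : List A} {u : V} (h₁ : ColexLt α β) (h₂ : ColexLt β γ) (hα : Reaches E s α u)
    (hγ : Reaches E s γ u) (hβ : (Istr E s β).Nonempty) : Reaches E s β u := by
  obtain ⟨v, hv⟩ := hβ
  rcases hW.le_or_reaches_of_colexLt hs h₂ hv hγ with hvu | rfl | ⟨-, h⟩
  · rcases hW.le_or_reaches_of_colexLt hs h₁ hα hv with huv | rfl | ⟨h, -⟩
    · exact absurd (hW.1.2.1 _ _ _ huv hvu) (hW.1.1 u)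
    · exact hv
    · exact h
  · exact hv
  · exact h

theorem getLast?_eq_of_istr_eq (hW : WheelerRel E r) (hs : ∀ u a, ¬ E u a s)
    (hα : (Istr E s α).Nonempty) (h : Istr E s α = Istr E s β) :
    α.getLast? = β.getLast? := by
  obtain ⟨u, hαu⟩ := hα
  have hβu : u ∈ Istr E s β := h ▸ hαu
  obtain rfl | ⟨α, a, rfl⟩ := List.eq_nil_or_concat' α <;>
    obtain rfl | ⟨β, b, rfl⟩ := List.eq_nil_or_concat' β
  · rfl
  · obtain rfl := reaches_nil_iff.1 hαu
    simpa using eq_nil_of_reaches_self hs hβu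
  · obtain rfl := reaches_nil_iff.1 hβu
    simpa using eq_nil_of_reaches_self hs hαu
  · obtain ⟨_, -, hea⟩ := reaches_snoc_iff.1 hαu
    obtain ⟨_, -, heb⟩ := reaches_snoc_iff.1 hβu
    simp [hW.label_eq hea heb]

theorem istr_eq_of_colexLt_of_colexLt (hW : WheelerRel E r) (hs : ∀ u a, ¬ E u a s)
    (hα : (Istr E s α).Nonempty) (hμ : (Istr E s μ).Nonempty) (h₁ : ColexLt α μ)
    (h₂ : ColexLt μ β) (hI : Istr E s α = Istr E s β)
    (hR : statesAbove E s α = statesAbove E s β) : Istr E s μ = Istr E s α := by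
  refine Set.Subset.antisymm (fun u hμu => ?_) fun u hαu =>
    hW.reaches_of_colexLt_of_colexLt hs h₁ h₂ hαu (hI ▸ hαu : u ∈ Istr E s β) hμ
  by_contra hαu
  have hu : u ∈ statesAbove E s α := fun δ hδu => by
    rcases eq_or_ne δ α with rfl | hne
    · exact absurd hδu hαu
    refine (colexLt_or_colexLt_of_ne hne).resolve_left fun hδα => hαu ?_
    exact hW.reaches_of_colexLt_of_colexLt hs hδα h₁ hδu hμu hα
  exact (hR ▸ hu : u ∈ statesAbove E s β) μ hμu |>.not_lt h₂

theorem mnc_of_istr_eq_of_statesAbove_eq (hW : WheelerRel E r) (hs : ∀ u a, ¬ E u a s)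
    {F : Set V} (hα : α ∈ PrefSet (Lang E F s)) (hβ : β ∈ PrefSet (Lang E F s))
    (hI : Istr E s α = Istr E s β) (hR : statesAbove E s α = statesAbove E s β) :
    MNc (Lang E F s) α β := by
  have hαne := istr_nonempty_of_mem_prefSet hα
  refine ⟨mnrel_lang_of_istr_eq hI, hW.getLast?_eq_of_istr_eq hs hαne hI, fun μ hμ hb => ?_⟩
  have hμne := istr_nonempty_of_mem_prefSet hμ
  rcases hb with ⟨h₁, h₂⟩ | ⟨h₁, h₂⟩
  · exact mnrel_lang_of_istr_eq (hW.istr_eq_of_colexLt_of_colexLt hs hαne hμne h₁ h₂ hI hR)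
  · refine mnrel_lang_of_istr_eq ((hW.istr_eq_of_colexLt_of_colexLt hs ?_ hμne h₁ h₂
      hI.symm hR.symm).trans hI.symm)
    exact istr_nonempty_of_mem_prefSet hβ

end WheelerRel

theorem mncFiniteIndex_of_wheelerNFARecog {L : Set (List A)} (hL : WheelerNFARecog L) :
    MNcFiniteIndex L := by
  obtain ⟨W, _, E, F, s, r, hs, -, -, hW, rfl⟩ := hL
  exact mncFiniteIndex_of_finite_image (fun α => (Istr E s α, statesAbove E s α))
    (Set.toFinite _) fun α hα β hβ h =>
      hW.mnc_of_istr_eq_of_statesAbove_eq hs hα hβ (congrArg Prod.fst h) (congrArg Prod.snd h)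

end WheelerNFA

section Transport

variable {V' : Type*} {E : V → A → V → Prop} (e : V' ≃ V)

theorem reaches_comap_iff {s' v' : V'} {α : List A} :
    Reaches (fun x a y => E (e x) a (e y)) s' α v' ↔ Reaches E (e s') α (e v') := by
  refine ⟨Reaches.map e fun _ _ _ => id, fun h => ?_⟩
  simpa using h.map e.symm (E' := fun x a y => E (e x) a (e y)) fun _ _ _ => by simp

theorem WheelerRel.comap [LinearOrder A] {r : V → V → Prop} (hW : WheelerRel E r) :
    WheelerRel (fun x a y => E (e x) a (e y)) (fun x y => r (e x) (e y)) := by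
  obtain ⟨⟨hirr, htrans, htot⟩, hsrc, hlt, hle⟩ := hW
  refine ⟨⟨fun x => hirr _, fun x y z => htrans _ _ _, fun x y hxy => htot _ _ (by simpa)⟩,
    fun x w hx ⟨u, a, hw⟩ => hsrc _ _ (fun u a hu => hx (e.symm u) a (by simpa)) ⟨_, a, hw⟩,
    fun _ _ _ _ _ _ => hlt _ _ _ _ _ _, fun _ _ _ _ _ h₁ h₂ h => ?_⟩
  simpa using hle _ _ _ _ _ h₁ h₂ h

theorem lang_comap (F : Set V) (s' : V') :
    Lang (fun x a y => E (e x) a (e y)) (e ⁻¹' F) s' = Lang E F (e s') := by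
  ext α
  simp only [Lang, Set.mem_ofPred_eq, Set.mem_preimage, reaches_comap_iff]
  exact ⟨fun ⟨w, hw, h⟩ => ⟨e w, hw, h⟩, fun ⟨w, hw, h⟩ => ⟨e.symm w, by simpa using hw, by simpa⟩⟩

end Transport

/-- `WheelerDFARecog` asks for a state type in `Type`; the quotient automaton built below lives in
the universe of `A`, so it is transported along `V ≃ Fin n`. -/
theorem wheelerDFARecog_of_finite [LinearOrder A] {L : Set (List A)} [Finite V]
    (E : V → A → V → Prop) (F : Set V) (s : V) (r : V → V → Prop)
    (hdet : ∀ u a v v', E u a v → E u a v' → v = v') (hs : ∀ u a, ¬ E u a s)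
    (hsrc : ∀ x, (∀ u a, ¬ E u a x) → x = s) (hreach : ∀ x, ∃ α, Reaches E s α x)
    (hW : WheelerRel E r) (hL : Lang E F s = L) : WheelerDFARecog L := by
  obtain ⟨n, ⟨e⟩⟩ := Finite.exists_equiv_fin V
  refine ⟨Fin n, inferInstance, fun x a y => E (e.symm x) a (e.symm y), e.symm ⁻¹' F, e s,
    fun x y => r (e.symm x) (e.symm y), fun u a v v' h h' => e.symm.injective (hdet _ _ _ _ h h'),
    fun u a => by simpa using hs (e.symm u) a, fun x hx => ?_, fun x => ?_, hW.comap e.symm,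
    by rw [lang_comap, Equiv.symm_apply_apply, hL]⟩
  · rw [← e.symm_apply_eq]
    exact hsrc (e.symm x) fun u a hu => hx (e u) a (by simpa)
  · obtain ⟨α, hα⟩ := hreach (e.symm x)
    exact ⟨α, reaches_comap_iff e.symm |>.2 (by simpa using hα)⟩

theorem wheelerDFARecog_empty [LinearOrder A] : WheelerDFARecog (∅ : Set (List A)) :=
  ⟨Unit, inferInstance, fun _ _ _ => False, ∅, (), fun _ _ => False, fun _ _ _ _ h => h.elim,
    fun _ _ => id, fun _ _ => rfl, fun _ => ⟨[], .nil⟩,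
    ⟨⟨fun _ => id, fun _ _ _ h => h.elim, fun _ _ h => absurd rfl h⟩,
      fun _ _ _ ⟨_, _, h⟩ => h, fun _ _ _ _ _ _ h => h.elim, fun _ _ _ _ _ h => h.elim⟩,
    by simp [Lang]⟩

namespace IsWheelerEquiv

variable [LinearOrder A] {L : Set (List A)} {sim : List A → List A → Prop} {α β γ : List A}
  {C C' : relClasses L sim}

def classOf (hα : α ∈ PrefSet L) : relClasses L sim := ⟨{β | sim α β}, α, hα, rfl⟩

def quotEdge (C : relClasses L sim) (a : A) (C' : relClasses L sim) : Prop :=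
  ∃ α ∈ C.1, α ++ [a] ∈ C'.1

def quotFinal : Set (relClasses L sim) := {C | ∃ α ∈ C.1, α ∈ L}

def quotOrder (C C' : relClasses L sim) : Prop := ∀ α ∈ C.1, ∀ β ∈ C'.1, ColexLt α β

theorem mem_classOf (hsim : IsWheelerEquiv L sim)
    (hα : α ∈ PrefSet L) : α ∈ (classOf hα : relClasses L sim).1 :=
  hsim.refl α hα

theorem exists_mem (hsim : IsWheelerEquiv L sim) (C : relClasses L sim) : ∃ α, α ∈ C.1 := by
  obtain ⟨_, α, hα, rfl⟩ := C
  exact ⟨α, hsim.refl α hα⟩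

theorem mem_iff (hsim : IsWheelerEquiv L sim) (hα : α ∈ C.1) : β ∈ C.1 ↔ sim α β := by
  obtain ⟨α₀, -, hC⟩ := C.2
  rw [hC] at hα ⊢
  exact ⟨fun hβ => hsim.trans (hsim.symm hα) hβ, fun h => hsim.trans hα h⟩

theorem mem_prefSet_of_mem_class (hsim : IsWheelerEquiv L sim) (hα : α ∈ C.1) : α ∈ PrefSet L := by
  obtain ⟨α₀, -, hC⟩ := C.2
  rw [hC] at hα
  exact (hsim.mem_prefSet hα).2

theorem ext_of_mem (hsim : IsWheelerEquiv L sim) (hα : α ∈ C.1) (hα' : α ∈ C'.1) : C = C' :=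
  Subtype.ext <| Set.ext fun _ => (hsim.mem_iff hα).trans (hsim.mem_iff hα').symm

theorem ne_of_mem_of_mem (hsim : IsWheelerEquiv L sim)
    (hne : C ≠ C') (hα : α ∈ C.1) (hβ : β ∈ C'.1) : α ≠ β := by
  rintro rfl
  exact hne (hsim.ext_of_mem hα hβ)

theorem append_mem (hsim : IsWheelerEquiv L sim)
    (hα : α ∈ C.1) (hβ : β ∈ C.1) (hαγ : α ++ γ ∈ C'.1) : β ++ γ ∈ C'.1 :=
  (hsim.mem_iff hαγ).2
    (hsim.append_right γ ((hsim.mem_iff hα).1 hβ) (hsim.mem_prefSet_of_mem_class hαγ)).2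

theorem mem_of_colexLt_of_colexLt (hsim : IsWheelerEquiv L sim)
    (hα : α ∈ C.1) (hγ : γ ∈ C.1) (hβ : β ∈ PrefSet L)
    (h₁ : ColexLt α β) (h₂ : ColexLt β γ) : β ∈ C.1 :=
  (hsim.mem_iff hα).2 (hsim.convex ((hsim.mem_iff hα).1 hγ) hβ h₁ h₂)

theorem quotOrder_of_colexLt (hsim : IsWheelerEquiv L sim)
    (hne : C ≠ C') (hα : α ∈ C.1) (hβ : β ∈ C'.1) (h : ColexLt α β) :
    quotOrder C C' := by
  have hsep : ∀ {γ δ}, γ ∈ C.1 → δ ∈ C'.1 → ColexLt γ δ ∨ ColexLt δ γ := fun hγ hδ =>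
    colexLt_or_colexLt_of_ne (hsim.ne_of_mem_of_mem hne hγ hδ)
  intro α' hα' β' hβ'
  have hα'β : ColexLt α' β := (hsep hα' hβ).resolve_right fun h' => hne <| hsim.ext_of_mem
    (hsim.mem_of_colexLt_of_colexLt hα hα' (hsim.mem_prefSet_of_mem_class hβ) h h') hβ
  exact (hsep hα' hβ').resolve_right fun h' => hne <| hsim.ext_of_mem hα'
    (hsim.mem_of_colexLt_of_colexLt hβ' hβ (hsim.mem_prefSet_of_mem_class hα') h' hα'β)

theorem quotEdge_deterministic (hsim : IsWheelerEquiv L sim)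
    {a : A} {U V₁ V₂ : relClasses L sim} (h₁ : quotEdge U a V₁)
    (h₂ : quotEdge U a V₂) : V₁ = V₂ := by
  obtain ⟨α, hαU, hαV⟩ := h₁
  obtain ⟨β, hβU, hβV⟩ := h₂
  exact hsim.ext_of_mem hαV (hsim.append_mem hβU hαU hβV)

theorem getLast?_eq_of_quotEdge (hsim : IsWheelerEquiv L sim)
    {a : A} (h : quotEdge C a C') (hα : α ∈ C'.1) :
    α.getLast? = some a := by
  obtain ⟨β, -, hβ⟩ := h
  simpa using (hsim.getLast?_eq ((hsim.mem_iff hβ).1 hα)).symm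

theorem not_quotEdge_classOf_nil (hsim : IsWheelerEquiv L sim) (h₀ : [] ∈ PrefSet L) {a : A} :
    ¬ quotEdge C a (classOf h₀) := fun h => by
  simpa using hsim.getLast?_eq_of_quotEdge h (hsim.mem_classOf h₀)

theorem eq_classOf_nil_of_forall_not_quotEdge (hsim : IsWheelerEquiv L sim) (h₀ : [] ∈ PrefSet L)
    (hC : ∀ U a, ¬ quotEdge U a C) : C = classOf h₀ := by
  obtain ⟨α, hα⟩ := hsim.exists_mem C
  obtain rfl | ⟨α, a, rfl⟩ := List.eq_nil_or_concat' α
  · exact hsim.ext_of_mem hα (hsim.mem_classOf h₀)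
  · have hα' := mem_prefSet_of_append_mem (hsim.mem_prefSet_of_mem_class hα)
    exact absurd ⟨α, hsim.mem_classOf hα', hα⟩ (hC (classOf hα') a)

theorem reaches_quotEdge_iff (hsim : IsWheelerEquiv L sim) (h₀ : [] ∈ PrefSet L) :
    Reaches quotEdge (classOf h₀) α C ↔ α ∈ C.1 := by
  constructor
  · intro h
    induction h with
    | nil => exact hsim.mem_classOf h₀
    | snoc _ he ih =>
      obtain ⟨β, hβ, hβa⟩ := he
      exact hsim.append_mem hβ ih hβa
  · induction α using List.reverseRecOn generalizing C with
    | nil => exact fun h => hsim.ext_of_mem (hsim.mem_classOf h₀) h ▸ .nil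
    | append_singleton α a ih =>
      intro h
      have hα := mem_prefSet_of_append_mem (hsim.mem_prefSet_of_mem_class h)
      exact (ih (hsim.mem_classOf hα)).snoc ⟨α, hsim.mem_classOf hα, h⟩

theorem wheelerRel_quotOrder (hsim : IsWheelerEquiv L sim) (h₀ : [] ∈ PrefSet L) :
    WheelerRel (quotEdge (L := L) (sim := sim)) quotOrder := by
  refine ⟨⟨fun C hC => ?_, fun C C' C'' h h' => ?_, fun C C' hne => ?_⟩, ?_, ?_, ?_⟩
  · obtain ⟨α, hα⟩ := hsim.exists_mem C
    exact colexLt_irrefl α (hC α hα α hα)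
  · obtain ⟨β, hβ⟩ := hsim.exists_mem C'
    exact fun α hα γ hγ => (h α hα β hβ).trans (h' β hβ γ hγ)
  · obtain ⟨α, hα⟩ := hsim.exists_mem C
    obtain ⟨β, hβ⟩ := hsim.exists_mem C'
    exact (colexLt_or_colexLt_of_ne (hsim.ne_of_mem_of_mem hne hα hβ)).imp
      (hsim.quotOrder_of_colexLt hne hα hβ) (hsim.quotOrder_of_colexLt (Ne.symm hne) hβ hα)
  · rintro C C' hC ⟨U, a, hUC'⟩
    obtain rfl := hsim.eq_classOf_nil_of_forall_not_quotEdge h₀ hC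
    obtain ⟨α, hαU, hα⟩ := hUC'
    refine hsim.quotOrder_of_colexLt (fun h => ?_) (hsim.mem_classOf h₀) hα (nil_colexLt_snoc a)
    exact hsim.not_quotEdge_classOf_nil h₀ (h ▸ ⟨α, hαU, hα⟩ : quotEdge U a (classOf h₀))
  · rintro U₁ a₁ V₁ U₂ a₂ V₂ ⟨α, -, hα⟩ ⟨β, -, hβ⟩ ha
    refine hsim.quotOrder_of_colexLt (fun h => ?_) hα hβ (colexLt_snoc_iff.2 (.inl ha))
    subst h
    exact ha.ne (by simpa using hsim.getLast?_eq ((hsim.mem_iff hα).1 hβ))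
  · rintro U₁ V₁ U₂ V₂ a ⟨α, hαU, hα⟩ ⟨β, hβU, hβ⟩ hr
    refine (eq_or_ne V₁ V₂).symm.imp_left fun hne => hsim.quotOrder_of_colexLt hne hα hβ ?_
    exact colexLt_snoc_iff.2 (.inr ⟨rfl, hr α hαU β hβU⟩)

theorem lang_quotEdge (hsim : IsWheelerEquiv L sim) (h₀ : [] ∈ PrefSet L) :
    Lang (quotEdge (sim := sim)) quotFinal (classOf h₀) = L := by
  ext α
  simp only [Lang, Set.mem_ofPred_eq, hsim.reaches_quotEdge_iff h₀]
  constructor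
  · rintro ⟨C, ⟨β, hβ, hβL⟩, hα⟩
    exact hsim.mem_of_mem hβL ((hsim.mem_iff hβ).1 hα)
  · intro hα
    have hα' := mem_prefSet_of_mem hα
    exact ⟨classOf hα', ⟨α, hsim.mem_classOf hα', hα⟩, hsim.mem_classOf hα'⟩

theorem wheelerDFARecog (hsim : IsWheelerEquiv L sim) : WheelerDFARecog L := by
  obtain rfl | ⟨α, hα⟩ := L.eq_empty_or_nonempty
  · -- `Pref(∅)` is empty, so the quotient automaton would have no start state.
    exact wheelerDFARecog_empty
  have h₀ : [] ∈ PrefSet L := ⟨α, hα⟩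
  have := hsim.finite_classes.to_subtype
  exact wheelerDFARecog_of_finite quotEdge quotFinal (classOf h₀) quotOrder
    (fun _ _ _ _ => hsim.quotEdge_deterministic) (fun _ _ => hsim.not_quotEdge_classOf_nil h₀)
    (fun _ => hsim.eq_classOf_nil_of_forall_not_quotEdge h₀)
    (fun C => (hsim.exists_mem C).imp fun _ => (hsim.reaches_quotEdge_iff h₀).2)
    (hsim.wheelerRel_quotOrder h₀) (hsim.lang_quotEdge h₀)

end IsWheelerEquiv

theorem WheelerDFARecog.wheelerNFARecog [LinearOrder A] {L : Set (List A)}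
    (h : WheelerDFARecog L) : WheelerNFARecog L :=
  let ⟨W, hW, E, F, s, r, _, h⟩ := h
  ⟨W, hW, E, F, s, r, h⟩

/-- Myhill-Nerode theorem for Wheeler languages: the four conditions are
equivalent. -/
theorem stmt13 {A : Type*} [LinearOrder A] (L : Set (List A)) :
    (WheelerNFARecog L ↔ MNcFiniteIndex L) ∧
    (MNcFiniteIndex L ↔ UnionOfNiceEquiv L) ∧
    (UnionOfNiceEquiv L ↔ WheelerDFARecog L) := by
  have h23 : MNcFiniteIndex L → UnionOfNiceEquiv L := fun h =>
    unionOfNiceEquiv_iff.2 ⟨_, isWheelerEquiv_mnc h⟩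
  have h32 : UnionOfNiceEquiv L → MNcFiniteIndex L := fun h =>
    let ⟨_, hsim⟩ := unionOfNiceEquiv_iff.1 h
    hsim.mncFiniteIndex
  have h34 : UnionOfNiceEquiv L → WheelerDFARecog L := fun h =>
    let ⟨_, hsim⟩ := unionOfNiceEquiv_iff.1 h
    hsim.wheelerDFARecog
  have h12 : WheelerNFARecog L → MNcFiniteIndex L := mncFiniteIndex_of_wheelerNFARecog
  have h41 : WheelerDFARecog L → WheelerNFARecog L := WheelerDFARecog.wheelerNFARecog
  exact ⟨⟨h12, h41 ∘ h34 ∘ h23⟩, ⟨h23, h32⟩, ⟨h34, h23 ∘ h12 ∘ h41⟩⟩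
end
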